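/- Fix q† ∈ [1,2] and d, s†, s' with s† > s'. Among all choices of smoothness s and integrability q ∈ [1,2] with s' < s - d/q, the posterior contraction rate ε_n = n^{-(σ - s')/(2(σ - s') + q(s - σ))}, where σ = min(s - d/q, s† - (d/q† - d/q)₊), is maximized (i.e., the exponent is largest) when s = s† + d/q - (d/q† - d/q)₊, in which case ε_n = n^{-1/(2 + d/(s† - s' - (d/q† - d/q)₊))}; and this optimal rate further equals n^{-1/(2 + d/(s† - s'))} whenever q ≤ q†. -/
import Mathlib


/-- `σ(s,q,s†,q†) = min(s - d/q, s† - (d/q† - d/q)₊)`. -/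
noncomputable def sigmaPar (d sd qd s q : ℝ) : ℝ :=
  min (s - d / q) (sd - max (d / qd - d / q) 0)

/-- The posterior-contraction rate exponent
`(σ - s')/(2(σ - s') + q(s - σ))` with `σ = σ(s,q,s†,q†)`. -/
noncomputable def rateExp (d sd qd s' s q : ℝ) : ℝ :=
  (sigmaPar d sd qd s q - s') / (2 * (sigmaPar d sd qd s q - s') + q * (s - sigmaPar d sd qd s q))

/-- Optimization of the contraction rate: for fixed `q† ∈ [1,2]`, `s† > s'`, among all `s` and
`q ∈ [1,2]` with `s' < s - d/q`, the rate exponent is maximized at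
`s* = s† + d/q - (d/q† - d/q)₊`, where it equals `1/(2 + d/(s† - s' - (d/q† - d/q)₊))`; and when
`q ≤ q†` this optimal exponent equals `1/(2 + d/(s† - s'))`. -/
theorem stmt19
    (qd sd s' d : ℝ) (hqd1 : 1 ≤ qd) (hqd2 : qd ≤ 2) (hd : 1 ≤ d) (hsd : s' < sd) :
    ∀ q s : ℝ, 1 ≤ q → q ≤ 2 → s' < s - d / q →
      s' + max (d / qd - d / q) 0 < sd →
      rateExp d sd qd s' s q
          ≤ rateExp d sd qd s' (sd + d / q - max (d / qd - d / q) 0) q ∧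
      rateExp d sd qd s' (sd + d / q - max (d / qd - d / q) 0) q
          = 1 / (2 + d / (sd - s' - max (d / qd - d / q) 0)) ∧
      (q ≤ qd →
        rateExp d sd qd s' (sd + d / q - max (d / qd - d / q) 0) q
          = 1 / (2 + d / (sd - s'))) := by
  intro q s hq1 hq2 hs hMd
  have hq0 : (0:ℝ) < q := by linarith
  have hd0 : (0:ℝ) < d := by linarith
  set M := max (d / qd - d / q) 0 with hM
  have hM0 : 0 ≤ M := le_max_right _ _
  have hA : 0 < sd - M - s' := by linarith
  set A := sd - M - s' with hAdef
  -- value at optimum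
  have hσstar : sigmaPar d sd qd (sd + d / q - M) q = sd - M := by
    unfold sigmaPar
    rw [← hM]
    have h1 : sd + d / q - M - d / q = sd - M := by ring
    rw [h1, min_self]
  have hqd' : q * (d / q) = d := by field_simp
  have hval : rateExp d sd qd s' (sd + d / q - M) q = A / (2 * A + d) := by
    unfold rateExp
    rw [hσstar]
    have h2 : sd + d / q - M - (sd - M) = d / q := by ring
    rw [h2, hqd']
  have hform : A / (2 * A + d) = 1 / (2 + d / A) := by
    have h2Ad : 0 < 2 * A + d := by linarith
    field_simp
  have hcomm : sd - s' - M = A := by rw [hAdef]; ring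
  refine ⟨?_, by rw [hval, hform, ← hcomm], ?_⟩
  · -- the general bound
    set σ := sigmaPar d sd qd s q with hσ
    have hσ1 : σ ≤ s - d / q := min_le_left _ _
    have hσ2 : σ ≤ sd - M := min_le_right _ _
    have hσlb : s' < σ := lt_min hs (by linarith)
    have hB : 0 < σ - s' := by linarith
    have hden1 : d ≤ q * (s - σ) := by
      calc d = q * (d / q) := hqd'.symm
        _ ≤ q * (s - σ) := by
            apply mul_le_mul_of_nonneg_left (by linarith) (le_of_lt hq0)
    rw [hval]
    unfold rateExp
    rw [← hσ]
    have hpos1 : 0 < 2 * (σ - s') + q * (s - σ) := by linarith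
    have hpos2 : 0 < 2 * A + d := by linarith
    rw [div_le_div_iff₀ hpos1 hpos2]
    have hBA : σ - s' ≤ A := by linarith
    nlinarith [mul_le_mul hBA hden1 (le_of_lt hd0) (by linarith : (0:ℝ) ≤ A)]
  · intro hqqd
    have hMz : M = 0 := by
      have : d / qd ≤ d / q := by
        apply div_le_div_of_nonneg_left (le_of_lt hd0) hq0 hqqd
      rw [hM, max_eq_right (by linarith)]
    rw [hval, hform, hAdef, hMz]
    ring_nf
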